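/- Let V be the Volterra operator on S with a_{ki} = −1 for all i > k. If x ∈ S has infinite support (infinitely many nonzero coordinates), then Vⁿ(x) converges pointwise to the zero sequence; in particular the trajectory has no ℓ¹-norm limit point in S. -/

import Mathlib

open Filter Topology Finset

/-! The Volterra map squares partial sums: `∑_{i<k} V(x)_i = (∑_{i<k} x_i)²`, so the
`n`-th iterate has partial sums `s_k ^ (2 ^ n)` with `s_k = ∑_{i<k} x_i`, and hence
`Vⁿ(x)_k = s_{k+1} ^ (2 ^ n) - s_k ^ (2 ^ n)`. Infinite support makes every `s_k < 1`, so each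
coordinate tends to `0`. An `ℓ¹`-limit along a subsequence would be the pointwise limit `0`,
which does not have total mass `1`. -/

def volterra (x : ℕ → ℝ) : ℕ → ℝ := fun k => x k ^ 2 + 2 * x k * ∑ i ∈ range k, x i

lemma sum_range_volterra (x : ℕ → ℝ) (k : ℕ) :
    ∑ i ∈ range k, volterra x i = (∑ i ∈ range k, x i) ^ 2 := by
  induction k with
  | zero => simp
  | succ k ih =>
    rw [sum_range_succ, ih, volterra, sum_range_succ]
    ring

lemma sum_range_iterate_volterra (x : ℕ → ℝ) (n k : ℕ) :
    ∑ i ∈ range k, (volterra^[n] x) i = (∑ i ∈ range k, x i) ^ 2 ^ n := by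
  induction n with
  | zero => simp
  | succ n ih => rw [Function.iterate_succ_apply', sum_range_volterra, ih, ← pow_mul, pow_succ]

lemma iterate_volterra_apply (x : ℕ → ℝ) (n k : ℕ) :
    (volterra^[n] x) k = (∑ i ∈ range (k + 1), x i) ^ 2 ^ n - (∑ i ∈ range k, x i) ^ 2 ^ n := by
  rw [← sum_range_iterate_volterra, ← sum_range_iterate_volterra, sum_range_succ, add_sub_cancel_left]

section

variable {x : ℕ → ℝ} (hpos : ∀ k, 0 ≤ x k)
include hpos

lemma iterate_volterra_nonneg (n k : ℕ) : 0 ≤ (volterra^[n] x) k := by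
  rw [iterate_volterra_apply, sub_nonneg, sum_range_succ]
  exact pow_le_pow_left₀ (sum_nonneg fun i _ => hpos i) (le_add_of_nonneg_right (hpos k)) _

lemma summable_iterate_volterra (hle : ∀ k, ∑ i ∈ range k, x i ≤ 1) (n : ℕ) :
    Summable (volterra^[n] x) :=
  summable_of_sum_range_le (iterate_volterra_nonneg hpos n) fun k => by
    rw [sum_range_iterate_volterra]
    exact pow_le_one₀ (sum_nonneg fun i _ => hpos i) (hle k)

lemma tendsto_iterate_volterra_apply_zero (hlt : ∀ k, ∑ i ∈ range k, x i < 1) (k : ℕ) :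
    Tendsto (fun n => (volterra^[n] x) k) atTop (𝓝 0) := by
  have hpow (k : ℕ) : Tendsto (fun n : ℕ => (∑ i ∈ range k, x i) ^ 2 ^ n) atTop (𝓝 0) :=
    (tendsto_pow_atTop_nhds_zero_of_lt_one (sum_nonneg fun i _ => hpos i) (hlt k)).comp
      (tendsto_pow_atTop_atTop_of_one_lt one_lt_two)
  simpa only [iterate_volterra_apply, sub_zero] using (hpow (k + 1)).sub (hpow k)

lemma sum_range_lt_tsum_of_infinite_support (hsum : Summable x)
    (hsupp : {i | x i ≠ 0}.Infinite) (k : ℕ) : ∑ i ∈ range k, x i < ∑' i, x i := by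
  obtain ⟨j, hj, hkj⟩ := hsupp.exists_gt k
  have hjk : j ∉ range k := by simpa using hkj.le
  calc ∑ i ∈ range k, x i < ∑ i ∈ insert j (range k), x i := by
        rw [sum_insert hjk]
        exact lt_add_of_pos_left _ ((hpos j).lt_of_ne' hj)
    _ ≤ ∑' i, x i := hsum.sum_le_tsum _ fun i _ => hpos i

end

lemma tendsto_apply_of_tendsto_tsum_abs_sub {ι α : Type*} {l : Filter ι} {f : ι → α → ℝ}
    {a : α → ℝ} (hf : ∀ i, Summable (f i)) (ha : Summable a)
    (h : Tendsto (fun i => ∑' k, |f i k - a k|) l (𝓝 0)) (k : α) :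
    Tendsto (fun i => f i k) l (𝓝 (a k)) := by
  rw [tendsto_iff_norm_sub_tendsto_zero]
  refine squeeze_zero (fun _ => norm_nonneg _) (fun i => ?_) h
  exact ((hf i).sub ha).abs.le_tsum k fun j _ => abs_nonneg _

theorem stmt_13 (V : (ℕ → ℝ) → (ℕ → ℝ))
    (hV : ∀ x k, V x k = x k ^ 2 + 2 * x k * ∑ i ∈ Finset.range k, x i)
    (x : ℕ → ℝ) (hx : (∀ k, 0 ≤ x k) ∧ Summable x ∧ ∑' k, x k = 1)
    (hsupp : {i | x i ≠ 0}.Infinite) :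
    (∀ k, Tendsto (fun n => (V^[n] x) k) atTop (𝓝 0)) ∧
    ¬∃ (a : ℕ → ℝ) (φ : ℕ → ℕ), StrictMono φ ∧
        ((∀ k, 0 ≤ a k) ∧ Summable a ∧ ∑' k, a k = 1) ∧
        Tendsto (fun n => ∑' k, |(V^[φ n] x) k - a k|) atTop (𝓝 0) := by
  obtain rfl : V = volterra := funext fun y => funext (hV y)
  obtain ⟨hpos, hsum, htot⟩ := hx
  have hlt (k : ℕ) : ∑ i ∈ range k, x i < 1 :=
    htot ▸ sum_range_lt_tsum_of_infinite_support hpos hsum hsupp k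
  have hcoord := tendsto_iterate_volterra_apply_zero hpos hlt
  refine ⟨hcoord, ?_⟩
  rintro ⟨a, φ, hφ, ⟨-, hasum, hat⟩, hconv⟩
  have ha (k : ℕ) : a k = 0 :=
    tendsto_nhds_unique
      (tendsto_apply_of_tendsto_tsum_abs_sub
        (fun n => summable_iterate_volterra hpos (fun k => (hlt k).le) (φ n)) hasum hconv k)
      ((hcoord k).comp hφ.tendsto_atTop)
  simp [ha] at hat
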